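/- arXiv:2602.18090 — 4 statements merged into one kernel-verified Lean document; each statement's English description precedes it below -/
import Mathlib

section
/- Let A be a promonad on a small category C with unit η and multiplication μ, let Z be an object of C, let (G, α) be an A-algebra, and let φ : C(−, Z) ⇒ G be a natural transformation. Then there exists a unique homomorphism of A-algebras h : (A(−, Z), μ) → (G, α) such that η_{X,Z} ; h_X = φ_X for every object X, namely h is determined by h_X(a ;^μ η(g)) = α(a, φ(g)) on generators. -/
open CategoryTheory

universe u v

/-- A promonad on a (small) category `C`. -/
structure Promonad (C : Type u) [Category.{v} C] where
  A : C → C → Type v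
  map : ∀ {X' X Y Y' : C}, (X' ⟶ X) → (Y ⟶ Y') → A X Y → A X' Y'
  map_id : ∀ {X Y : C} (a : A X Y), map (𝟙 X) (𝟙 Y) a = a
  map_comp : ∀ {X'' X' X Y Y' Y'' : C} (f' : X'' ⟶ X') (f : X' ⟶ X)
    (g : Y ⟶ Y') (g' : Y' ⟶ Y'') (a : A X Y),
    map (f' ≫ f) (g ≫ g') a = map f' g' (map f g a)
  η : ∀ {X Y : C}, (X ⟶ Y) → A X Y
  η_natural : ∀ {X' X Y Y' : C} (f : X' ⟶ X) (g : Y ⟶ Y') (h : X ⟶ Y),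
    map f g (η h) = η (f ≫ h ≫ g)
  comp : ∀ {X Y Z : C}, A X Y → A Y Z → A X Z
  comp_natural : ∀ {X' X Y Z Z' : C} (f : X' ⟶ X) (g : Z ⟶ Z') (a : A X Y) (b : A Y Z),
    map f g (comp a b) = comp (map f (𝟙 Y) a) (map (𝟙 Y) g b)
  comp_dinatural : ∀ {X Y Y' Z : C} (f : Y ⟶ Y') (a : A X Y) (b : A Y' Z),
    comp (map (𝟙 X) f a) b = comp a (map f (𝟙 Z) b)
  unit_left : ∀ {X Y : C} (a : A X Y), comp (η (𝟙 X)) a = a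
  unit_right : ∀ {X Y : C} (a : A X Y), comp a (η (𝟙 Y)) = a
  comp_assoc : ∀ {W X Y Z : C} (a : A W X) (b : A X Y) (c : A Y Z),
    comp (comp a b) c = comp a (comp b c)

/-- An algebra `(G, α)` of a promonad `P`: a presheaf `G : C^op → Set` together with a
natural family `α : P.A X Y × G Y → G X` satisfying the unit and associativity laws. -/
structure PromonadAlgebra {C : Type u} [Category.{v} C] (P : Promonad C) where
  G : C → Type v
  Gmap : ∀ {X' X : C}, (X' ⟶ X) → G X → G X'
  Gmap_id : ∀ {X : C} (k : G X), Gmap (𝟙 X) k = k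
  Gmap_comp : ∀ {X'' X' X : C} (f' : X'' ⟶ X') (f : X' ⟶ X) (k : G X),
    Gmap (f' ≫ f) k = Gmap f' (Gmap f k)
  act : ∀ {X Y : C}, P.A X Y → G Y → G X
  act_natural_left : ∀ {X' X Y : C} (f : X' ⟶ X) (a : P.A X Y) (k : G Y),
    act (P.map f (𝟙 Y) a) k = Gmap f (act a k)
  act_natural_right : ∀ {X Y Y' : C} (g : Y ⟶ Y') (a : P.A X Y) (k : G Y'),
    act (P.map (𝟙 X) g a) k = act a (Gmap g k)
  act_unit : ∀ {X : C} (k : G X), act (P.η (𝟙 X)) k = k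
  act_comp : ∀ {X Y Z : C} (a : P.A X Y) (b : P.A Y Z) (k : G Z),
    act (P.comp a b) k = act a (act b k)

/-- Freeness of the algebra `(A(−,Z), μ)`: given an algebra `(G, α)` and a natural
transformation `φ : C(−, Z) ⇒ G`, there is a unique homomorphism of `P`-algebras
`h : (A(−,Z), μ) → (G, α)` with `η ; h = φ`. -/
theorem free_promonad_algebra_universal {C : Type u} [Category.{v} C]
    (P : Promonad C) (Alg : PromonadAlgebra P) (Z : C)
    (φ : ∀ X : C, (X ⟶ Z) → Alg.G X)
    (hφ : ∀ {X' X : C} (f : X' ⟶ X) (g : X ⟶ Z), φ X' (f ≫ g) = Alg.Gmap f (φ X g)) :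
    ∃! h : ∀ X : C, P.A X Z → Alg.G X,
      (∀ {X' X : C} (f : X' ⟶ X) (a : P.A X Z),
        h X' (P.map f (𝟙 Z) a) = Alg.Gmap f (h X a)) ∧
      (∀ {X Y : C} (a : P.A X Y) (k : P.A Y Z),
        h X (P.comp a k) = Alg.act a (h Y k)) ∧
      (∀ {X : C} (g : X ⟶ Z), h X (P.η g) = φ X g) := by
  refine ⟨fun X a => Alg.act a (φ Z (𝟙 Z)), ⟨?_, ?_, ?_⟩, ?_⟩
  · intro X' X f a
    exact Alg.act_natural_left f a (φ Z (𝟙 Z))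
  · intro X Y a k
    exact Alg.act_comp a k (φ Z (𝟙 Z))
  · intro X g
    have h1 : P.η g = P.map (𝟙 X) g (P.η (𝟙 X)) := by
      rw [P.η_natural]; simp
    show Alg.act (P.η g) (φ Z (𝟙 Z)) = φ X g
    rw [h1, Alg.act_natural_right, Alg.act_unit, ← hφ]
    simp
  · intro h ⟨h1, h2, h3⟩
    funext X a
    show h X a = Alg.act a (φ Z (𝟙 Z))
    conv_lhs => rw [← P.unit_right a, h2, h3]
end

section
/- Let X be a Cartesian reverse differential category with reverse differential combinator R, and let A be a strong promonad on X with unit η, multiplication μ (written ;^μ), and strength st. Define R'_A(X) := A(X, X) and, for a morphism f : X → Y and k ∈ A(Y, Y), define R'_A(f)(k) := η(δ_X ; (f × id_X)) ;^μ st_X(k) ;^μ η(R[f]). Then R'_A(id_X) = id and R'_A(f ; g) = R'_A(g) followed by R'_A(f); hence R'_A is a functor X^op → Set. -/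
universe u v w

/-- A Cartesian reverse differential category (the data and axioms used here):
a category with chosen finite products, a left-additive structure on hom-sets, and a
reverse differential combinator `R : Hom X Y → Hom (X × Y) X` satisfying (among the
CRDC axioms) additivity (RD.1), `R[id] = π₂` (a consequence of RD.3), and the chain
rule (RD.5). Composition is in diagrammatic order. -/
structure CRDC where
  Obj : Type u
  Hom : Obj → Obj → Type v
  id : (X : Obj) → Hom X X
  comp : ∀ {X Y Z : Obj}, Hom X Y → Hom Y Z → Hom X Z
  id_comp : ∀ {X Y : Obj} (f : Hom X Y), comp (id X) f = f
  comp_id : ∀ {X Y : Obj} (f : Hom X Y), comp f (id Y) = f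
  comp_assoc : ∀ {W X Y Z : Obj} (f : Hom W X) (g : Hom X Y) (h : Hom Y Z),
    comp (comp f g) h = comp f (comp g h)
  prod : Obj → Obj → Obj
  fst : ∀ {X Y : Obj}, Hom (prod X Y) X
  snd : ∀ {X Y : Obj}, Hom (prod X Y) Y
  pair : ∀ {X Y Z : Obj}, Hom X Y → Hom X Z → Hom X (prod Y Z)
  pair_fst : ∀ {X Y Z : Obj} (f : Hom X Y) (g : Hom X Z), comp (pair f g) fst = f
  pair_snd : ∀ {X Y Z : Obj} (f : Hom X Y) (g : Hom X Z), comp (pair f g) snd = g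
  pair_ext : ∀ {X Y Z : Obj} (h : Hom X (prod Y Z)), pair (comp h fst) (comp h snd) = h
  add : ∀ {X Y : Obj}, Hom X Y → Hom X Y → Hom X Y
  zero : ∀ {X Y : Obj}, Hom X Y
  add_comm : ∀ {X Y : Obj} (f g : Hom X Y), add f g = add g f
  add_assoc : ∀ {X Y : Obj} (f g h : Hom X Y), add (add f g) h = add f (add g h)
  zero_add : ∀ {X Y : Obj} (f : Hom X Y), add zero f = f
  comp_add : ∀ {X Y Z : Obj} (x : Hom X Y) (f g : Hom Y Z),
    comp x (add f g) = add (comp x f) (comp x g)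
  comp_zero : ∀ {X Y Z : Obj} (x : Hom X Y), comp x (zero : Hom Y Z) = zero
  R : ∀ {X Y : Obj}, Hom X Y → Hom (prod X Y) X
  R_add : ∀ {X Y : Obj} (f g : Hom X Y), R (add f g) = add (R f) (R g)
  R_zero : ∀ {X Y : Obj}, R (zero : Hom X Y) = zero
  R_id : ∀ {X : Obj}, R (id X) = snd
  R_comp : ∀ {X Y Z : Obj} (f : Hom X Y) (g : Hom Y Z),
    R (comp f g) = comp (pair fst (comp (pair (comp fst f) snd) (R g))) (R f)

/-- The product of two morphisms `f × g`. -/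
def CRDC.pmap (C : CRDC) {X Y X' Y' : C.Obj} (f : C.Hom X Y) (g : C.Hom X' Y') :
    C.Hom (C.prod X X') (C.prod Y Y') :=
  C.pair (C.comp C.fst f) (C.comp C.snd g)

/-- The diagonal `δ_X : X → X × X`. -/
def CRDC.diag (C : CRDC) (X : C.Obj) : C.Hom X (C.prod X X) :=
  C.pair (C.id X) (C.id X)

/-- The associator `X × (Y × Z) → (X × Y) × Z`. -/
def CRDC.assocHom (C : CRDC) (X Y Z : C.Obj) :
    C.Hom (C.prod X (C.prod Y Z)) (C.prod (C.prod X Y) Z) :=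
  C.pair (C.pair C.fst (C.comp C.snd C.fst)) (C.comp C.snd C.snd)

/-- A strong promonad `A` on `C`, with unit `η`, multiplication `;^μ` (written `mul`),
and strength `st` satisfying the strength laws. -/
structure StrongPromonad (C : CRDC) where
  A : C.Obj → C.Obj → Type w
  η : ∀ {X Y : C.Obj}, C.Hom X Y → A X Y
  mul : ∀ {X Y Z : C.Obj}, A X Y → A Y Z → A X Z
  η_mul_η : ∀ {X Y Z : C.Obj} (f : C.Hom X Y) (g : C.Hom Y Z),
    mul (η f) (η g) = η (C.comp f g)
  unit_left : ∀ {X Y : C.Obj} (a : A X Y), mul (η (C.id X)) a = a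
  unit_right : ∀ {X Y : C.Obj} (a : A X Y), mul a (η (C.id Y)) = a
  mul_assoc : ∀ {W X Y Z : C.Obj} (a : A W X) (b : A X Y) (c : A Y Z),
    mul (mul a b) c = mul a (mul b c)
  st : ∀ {X Y : C.Obj} (Z : C.Obj), A X Y → A (C.prod X Z) (C.prod Y Z)
  st_η : ∀ {X Y : C.Obj} (Z : C.Obj) (f : C.Hom X Y),
    st Z (η f) = η (C.pmap f (C.id Z))
  st_mul : ∀ {X Y W : C.Obj} (Z : C.Obj) (a : A X Y) (b : A Y W),
    st Z (mul a b) = mul (st Z a) (st Z b)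
  st_nat : ∀ {X Y Z Z' : C.Obj} (h : C.Hom Z Z') (a : A X Y),
    mul (st Z a) (η (C.pmap (C.id Y) h)) = mul (η (C.pmap (C.id X) h)) (st Z' a)
  st_fst : ∀ {X Y : C.Obj} (Z : C.Obj) (a : A X Y),
    mul (st Z a) (η C.fst) = mul (η C.fst) a
  st_assoc : ∀ {X Y : C.Obj} (Z W : C.Obj) (a : A X Y),
    mul (st (C.prod Z W) a) (η (C.assocHom Y Z W))
      = mul (η (C.assocHom X Z W)) (st W (st Z a))

/-- The reverse-algebra action
`R'_A(f)(k) := η(δ_X ; (f × id_X)) ;^μ st_X(k) ;^μ η(R[f])` on `R'_A(X) := A(X, X)`. -/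
def ralg {C : CRDC} (P : StrongPromonad C) {X Y : C.Obj} (f : C.Hom X Y) (k : P.A Y Y) :
    P.A X X :=
  P.mul (P.η (C.comp (C.diag X) (C.pmap f (C.id X))))
    (P.mul (P.st X k) (P.η (C.comp (C.pair C.snd C.fst) (C.R f))))


section Aux

variable {C : CRDC}

theorem comp_pair {W X Y Z : C.Obj} (h : C.Hom W X) (f : C.Hom X Y) (g : C.Hom X Z) :
    C.comp h (C.pair f g) = C.pair (C.comp h f) (C.comp h g) := by
  conv_lhs => rw [← C.pair_ext (C.comp h (C.pair f g))]
  rw [C.comp_assoc, C.pair_fst, C.comp_assoc, C.pair_snd]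

theorem pair_fst_assoc {X Y Z W : C.Obj} (f : C.Hom X Y) (g : C.Hom X Z) (h : C.Hom Y W) :
    C.comp (C.pair f g) (C.comp C.fst h) = C.comp f h := by
  rw [← C.comp_assoc, C.pair_fst]

theorem pair_snd_assoc {X Y Z W : C.Obj} (f : C.Hom X Y) (g : C.Hom X Z) (h : C.Hom Z W) :
    C.comp (C.pair f g) (C.comp C.snd h) = C.comp g h := by
  rw [← C.comp_assoc, C.pair_snd]

theorem pair_fst_snd {X Y : C.Obj} : C.pair (C.fst : C.Hom (C.prod X Y) X) C.snd = C.id _ := by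
  have h := C.pair_ext (C.id (C.prod X Y))
  rwa [C.id_comp, C.id_comp] at h

theorem eta_mul_eta_mul {P : StrongPromonad C} {X Y Z W : C.Obj}
    (u : C.Hom X Y) (v : C.Hom Y Z) (x : P.A Z W) :
    P.mul (P.η u) (P.mul (P.η v) x) = P.mul (P.η (C.comp u v)) x := by
  rw [← P.mul_assoc, P.η_mul_η]

theorem shuffle {P : StrongPromonad C} {X Y Z W V U : C.Obj}
    (u : C.Hom X Y) (v : C.Hom Y Z) (s : P.A Z W) (w1 : C.Hom W V) (w2 : C.Hom V U) :
    P.mul (P.η u) (P.mul (P.mul (P.η v) (P.mul s (P.η w1))) (P.η w2))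
      = P.mul (P.η (C.comp u v)) (P.mul s (P.η (C.comp w1 w2))) := by
  simp only [StrongPromonad.mul_assoc, StrongPromonad.η_mul_η, eta_mul_eta_mul]

theorem eta_split3 {P : StrongPromonad C} {X Y Z W V : C.Obj}
    (u : C.Hom X Y) (v : C.Hom Y Z) (w : C.Hom Z W) (x : P.A W V) :
    P.mul (P.η (C.comp u (C.comp v w))) x
      = P.mul (P.η u) (P.mul (P.η v) (P.mul (P.η w) x)) := by
  simp only [eta_mul_eta_mul]

theorem comp_pair_assoc {W X Y Z V : C.Obj} (h : C.Hom W X) (f : C.Hom X Y) (g : C.Hom X Z)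
    (e : C.Hom (C.prod Y Z) V) :
    C.comp h (C.comp (C.pair f g) e) = C.comp (C.pair (C.comp h f) (C.comp h g)) e := by
  rw [← C.comp_assoc, comp_pair]

end Aux

/-- Lemma 6.1 (`ralg-A-is-functor`): `R'_A(id) = id` and
`R'_A(f ; g) = R'_A(g)` followed by `R'_A(f)`; hence `R'_A : X^op → Set` is a
functor. -/
theorem ralg_functor {C : CRDC} (P : StrongPromonad C) :
    (∀ {X : C.Obj} (k : P.A X X), ralg P (C.id X) k = k) ∧
    (∀ {X Y Z : C.Obj} (f : C.Hom X Y) (g : C.Hom Y Z) (k : P.A Z Z),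
      ralg P (C.comp f g) k = ralg P f (ralg P g k)) := by
  constructor
  · intro X k
    have h1 : C.comp (C.diag X) (C.pmap (C.id X) (C.id X)) = C.diag X := by
      simp only [CRDC.pmap, CRDC.diag, comp_pair, CRDC.pair_fst, CRDC.pair_snd, pair_fst_assoc,
        pair_snd_assoc, CRDC.id_comp, CRDC.comp_id]
    have h2 : C.comp (C.pair (C.snd : C.Hom (C.prod X X) X) C.fst) (C.R (C.id X))
        = C.fst := by
      rw [C.R_id, C.pair_snd]
    unfold ralg
    rw [h1, h2, P.st_fst, ← P.mul_assoc, P.η_mul_η]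
    have h3 : C.comp (C.diag X) (C.fst : C.Hom (C.prod X X) X) = C.id X := C.pair_fst _ _
    rw [h3, P.unit_left]
  · intro X Y Z f g k
    have Ea : C.comp (C.comp (C.diag X) (C.pmap f (C.id X)))
          (C.pmap (C.comp (C.diag Y) (C.pmap g (C.id Y))) (C.id X))
        = C.comp (C.comp (C.diag X) (C.pmap (C.comp f g) (C.id X)))
            (C.comp (C.pmap (C.id Z) (C.pair f (C.id X))) (C.assocHom Z Y X)) := by
      simp only [CRDC.pmap, CRDC.diag, CRDC.assocHom, comp_pair, CRDC.pair_fst, CRDC.pair_snd,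
        pair_fst_assoc, pair_snd_assoc, pair_fst_snd, comp_pair_assoc, CRDC.comp_assoc,
        CRDC.id_comp, CRDC.comp_id]
    have E : C.comp (C.pmap (C.id Z) (C.pair f (C.id X)))
          (C.comp (C.assocHom Z Y X)
            (C.comp (C.pmap (C.comp (C.pair C.snd C.fst) (C.R g)) (C.id X))
              (C.comp (C.pair C.snd C.fst) (C.R f))))
        = C.comp (C.pair C.snd C.fst) (C.R (C.comp f g)) := by
      rw [C.R_comp]
      simp only [CRDC.pmap, CRDC.diag, CRDC.assocHom, comp_pair, CRDC.pair_fst, CRDC.pair_snd,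
        pair_fst_assoc, pair_snd_assoc, pair_fst_snd, comp_pair_assoc, CRDC.comp_assoc,
        CRDC.id_comp, CRDC.comp_id]
    symm
    calc ralg P f (ralg P g k)
        = P.mul (P.η (C.comp (C.diag X) (C.pmap f (C.id X))))
            (P.mul (P.mul (P.η (C.pmap (C.comp (C.diag Y) (C.pmap g (C.id Y))) (C.id X)))
              (P.mul (P.st X (P.st Y k))
                (P.η (C.pmap (C.comp (C.pair C.snd C.fst) (C.R g)) (C.id X)))))
              (P.η (C.comp (C.pair C.snd C.fst) (C.R f)))) := by
          unfold ralg; rw [P.st_mul, P.st_mul, P.st_η, P.st_η]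
      _ = P.mul (P.η (C.comp (C.comp (C.diag X) (C.pmap f (C.id X)))
              (C.pmap (C.comp (C.diag Y) (C.pmap g (C.id Y))) (C.id X))))
            (P.mul (P.st X (P.st Y k))
              (P.η (C.comp (C.pmap (C.comp (C.pair C.snd C.fst) (C.R g)) (C.id X))
                (C.comp (C.pair C.snd C.fst) (C.R f))))) := shuffle _ _ _ _ _
      _ = P.mul (P.η (C.comp (C.diag X) (C.pmap (C.comp f g) (C.id X))))
            (P.mul (P.η (C.pmap (C.id Z) (C.pair f (C.id X))))
              (P.mul (P.η (C.assocHom Z Y X))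
                (P.mul (P.st X (P.st Y k))
                  (P.η (C.comp (C.pmap (C.comp (C.pair C.snd C.fst) (C.R g)) (C.id X))
                    (C.comp (C.pair C.snd C.fst) (C.R f))))))) := by
          rw [Ea, eta_split3]
      _ = P.mul (P.η (C.comp (C.diag X) (C.pmap (C.comp f g) (C.id X))))
            (P.mul (P.η (C.pmap (C.id Z) (C.pair f (C.id X))))
              (P.mul (P.st (C.prod Y X) k)
                (P.mul (P.η (C.assocHom Z Y X))
                  (P.η (C.comp (C.pmap (C.comp (C.pair C.snd C.fst) (C.R g)) (C.id X))
                    (C.comp (C.pair C.snd C.fst) (C.R f))))))) := by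
          rw [← P.mul_assoc (P.η (C.assocHom Z Y X)), ← P.st_assoc, P.mul_assoc]
      _ = P.mul (C.comp (C.diag X) (C.pmap (C.comp f g) (C.id X)) |> P.η)
            (P.mul (P.mul (P.η (C.pmap (C.id Z) (C.pair f (C.id X))))
              (P.st (C.prod Y X) k))
              (P.η (C.comp (C.assocHom Z Y X)
                (C.comp (C.pmap (C.comp (C.pair C.snd C.fst) (C.R g)) (C.id X))
                  (C.comp (C.pair C.snd C.fst) (C.R f)))))) := by
          rw [P.η_mul_η, P.mul_assoc]
      _ = P.mul (P.η (C.comp (C.diag X) (C.pmap (C.comp f g) (C.id X))))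
            (P.mul (P.mul (P.st X k) (P.η (C.pmap (C.id Z) (C.pair f (C.id X)))))
              (P.η (C.comp (C.assocHom Z Y X)
                (C.comp (C.pmap (C.comp (C.pair C.snd C.fst) (C.R g)) (C.id X))
                  (C.comp (C.pair C.snd C.fst) (C.R f)))))) := by
          rw [← P.st_nat]
      _ = P.mul (P.η (C.comp (C.diag X) (C.pmap (C.comp f g) (C.id X))))
            (P.mul (P.st X k)
              (P.η (C.comp (C.pmap (C.id Z) (C.pair f (C.id X)))
                (C.comp (C.assocHom Z Y X)
                  (C.comp (C.pmap (C.comp (C.pair C.snd C.fst) (C.R g)) (C.id X))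
                    (C.comp (C.pair C.snd C.fst) (C.R f))))))) := by
          rw [P.mul_assoc, P.η_mul_η]
      _ = ralg P (C.comp f g) k := by rw [E]; rfl
end

section
/- In the setting of a strong promonad A on a Cartesian reverse differential category X, define the family α(f, k) := η(δ_X ; (f × id_X)) ;^μ st_X(k) ;^μ η(R[f]) for f : X → Y in X and k ∈ A(Y, Y). Then α satisfies the algebra unit law: α(id_X, k) = k for all k ∈ A(X, X). -/
universe u v w

/-- The algebra unit law for the reverse-algebra action: `α(id_X, k) = k` for all
`k ∈ A(X, X)`, where `α(f, k) = η(δ_X ; (f × id_X)) ;^μ st_X(k) ;^μ η(R[f])`. -/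
theorem ralg_unit {C : CRDC} (P : StrongPromonad C) {X : C.Obj} (k : P.A X X) :
    ralg P (C.id X) k = k := by
  have hR : C.comp (C.pair C.snd C.fst) (C.R (C.id X)) = (C.fst : C.Hom (C.prod X X) X) := by
    rw [C.R_id, C.pair_snd]
  have hpmap : C.pmap (C.id X) (C.id X) = C.id (C.prod X X) := by
    unfold CRDC.pmap
    rw [C.comp_id, C.comp_id]
    have := C.pair_ext (C.id (C.prod X X))
    rwa [C.id_comp, C.id_comp] at this
  have hdiagfst : C.comp (C.diag X) (C.fst : C.Hom (C.prod X X) X) = C.id X := by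
    unfold CRDC.diag; rw [C.pair_fst]
  unfold ralg
  rw [hR, hpmap, C.comp_id, P.st_fst, ← P.mul_assoc, P.η_mul_η, hdiagfst, P.unit_left]
end

section
/- Let Σ be a set of operation symbols, each with assigned input and output objects in a small monoidal category C. Let Arr_Σ(X, Y) be the set of formal arrow terms generated by arr(f) for f ∈ C(X, Y), the operation symbols, sequential composition >>>, and first_Z, quotiented by the nine arrow axioms (associativity of >>>, functoriality of arr, unit laws, naturality of first with respect to pure maps on the second component, first interacting with projections and associators, first(arr f) = arr(f × id), and first(a >>> b) = first(a) >>> first(b)). Then A_Σ(X, Y) := Arr_Σ(X, Y)/∼ carries the structure of a strong promonad on C: it is functorial in X (contravariantly) and Y (covariantly) via precomposition and postcomposition with arr, has unit η = arr, associative multiplication given by >>>, and a strength given by first satisfying the strength laws. -/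
open CategoryTheory MonoidalCategory

universe u v

/-- A signature of operation symbols over a category `C`: each operation symbol has a
coarity (source) and an arity (target) object. -/
structure Signature (C : Type u) [Category.{v} C] where
  Op : Type v
  src : Op → C
  tgt : Op → C

/-- Formal arrow terms over a signature: generated by `arr f` for morphisms `f` of `C`,
the operation symbols, sequential composition `>>>` (`seq`), and `first_Z`. -/
inductive ArrTm {C : Type u} [Category.{v} C] [CartesianMonoidalCategory C]
    (S : Signature C) : C → C → Type (max u v)
  | arr : ∀ {X Y : C}, (X ⟶ Y) → ArrTm S X Y
  | op : ∀ o : S.Op, ArrTm S (S.src o) (S.tgt o)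
  | seq : ∀ {X Y Z : C}, ArrTm S X Y → ArrTm S Y Z → ArrTm S X Z
  | first : ∀ {X Y : C} (Z : C), ArrTm S X Y → ArrTm S (X ⊗ Z) (Y ⊗ Z)

/-- The congruence generated by the nine arrow axioms (Fig. "axioms of the congruence
relation"): associativity of `>>>`, functoriality of `arr`, unit laws, commutation of
`first` with pure maps on the second component, with projections and with associators,
`first (arr f) = arr (f × id)`, and `first (a >>> b) = first a >>> first b`. -/
inductive ArrRel {C : Type u} [Category.{v} C] [CartesianMonoidalCategory C]
    {S : Signature C} : ∀ {X Y : C}, ArrTm S X Y → ArrTm S X Y → Prop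
  | refl : ∀ {X Y} (a : ArrTm S X Y), ArrRel a a
  | symm : ∀ {X Y} {a b : ArrTm S X Y}, ArrRel a b → ArrRel b a
  | trans : ∀ {X Y} {a b c : ArrTm S X Y}, ArrRel a b → ArrRel b c → ArrRel a c
  | seq_congr : ∀ {X Y Z} {a a' : ArrTm S X Y} {b b' : ArrTm S Y Z},
      ArrRel a a' → ArrRel b b' → ArrRel (a.seq b) (a'.seq b')
  | first_congr : ∀ {X Y} (Z) {a a' : ArrTm S X Y},
      ArrRel a a' → ArrRel (a.first Z) (a'.first Z)
  | assoc : ∀ {W X Y Z} (a : ArrTm S W X) (b : ArrTm S X Y) (c : ArrTm S Y Z),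
      ArrRel ((a.seq b).seq c) (a.seq (b.seq c))
  | arr_comp : ∀ {X Y Z} (f : X ⟶ Y) (g : Y ⟶ Z),
      ArrRel (ArrTm.arr (S := S) (f ≫ g)) ((ArrTm.arr f).seq (ArrTm.arr g))
  | id_seq : ∀ {X Y} (a : ArrTm S X Y), ArrRel ((ArrTm.arr (𝟙 X)).seq a) a
  | seq_id : ∀ {X Y} (a : ArrTm S X Y), ArrRel (a.seq (ArrTm.arr (𝟙 Y))) a
  | first_pure : ∀ {X Y Z Z'} (a : ArrTm S X Y) (f : Z ⟶ Z'),
      ArrRel ((a.first Z).seq (ArrTm.arr (Y ◁ f)))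
        ((ArrTm.arr (X ◁ f)).seq (a.first Z'))
  | first_fst : ∀ {X Y Z} (a : ArrTm S X Y),
      ArrRel ((a.first Z).seq (ArrTm.arr (CartesianMonoidalCategory.fst Y Z)))
        ((ArrTm.arr (CartesianMonoidalCategory.fst X Z)).seq a)
  | first_assoc : ∀ {X Y} (Z W : C) (a : ArrTm S X Y),
      ArrRel ((a.first (Z ⊗ W)).seq (ArrTm.arr (α_ Y Z W).inv))
        ((ArrTm.arr (α_ X Z W).inv).seq ((a.first Z).first W))
  | first_arr : ∀ {X Y} (Z : C) (f : X ⟶ Y),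
      ArrRel ((ArrTm.arr (S := S) f).first Z) (ArrTm.arr (f ▷ Z))
  | first_seq : ∀ {X Y Z} (W : C) (a : ArrTm S X Y) (b : ArrTm S Y Z),
      ArrRel ((a.seq b).first W) ((a.first W).seq (b.first W))

/-- `A_Σ(X, Y)`: arrow terms modulo the arrow congruence. -/
def ASig {C : Type u} [Category.{v} C] [CartesianMonoidalCategory C]
    (S : Signature C) (X Y : C) : Type (max u v) :=
  Quot (ArrRel (S := S) (X := X) (Y := Y))

/-! Each promonad law is one of the arrow axioms carried to the quotient, except functoriality
of `dimap` and naturality of `arr`: since `dimap f g a = arr f >>> a >>> arr g`, these follow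
from `arr (f ≫ g) = arr f >>> arr g` and associativity of `>>>`. -/

namespace ASig

variable {C : Type u} [Category.{v} C] [CartesianMonoidalCategory C] {S : Signature C}

def arr {X Y : C} (f : X ⟶ Y) : ASig S X Y := Quot.mk _ (ArrTm.arr f)

def comp {X Y Z : C} : ASig S X Y → ASig S Y Z → ASig S X Z :=
  Quot.lift₂ (fun a b => Quot.mk _ (a.seq b))
    (fun _ _ _ h => Quot.sound (.seq_congr (.refl _) h))
    (fun _ _ _ h => Quot.sound (.seq_congr h (.refl _)))

def dimap {X' X Y Y' : C} (f : X' ⟶ X) (g : Y ⟶ Y') : ASig S X Y → ASig S X' Y' :=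
  Quot.map (fun a => ((ArrTm.arr f).seq a).seq (ArrTm.arr g))
    (fun _ _ h => .seq_congr (.seq_congr (.refl _) h) (.refl _))

def first {X Y : C} (Z : C) : ASig S X Y → ASig S (X ⊗ Z) (Y ⊗ Z) :=
  Quot.map (ArrTm.first Z) (fun _ _ h => .first_congr Z h)

theorem comp_mk {X Y Z : C} (a : ArrTm S X Y) (b : ArrTm S Y Z) :
    comp (Quot.mk _ a) (Quot.mk _ b) = Quot.mk _ (a.seq b) := rfl

theorem dimap_mk {X' X Y Y' : C} (f : X' ⟶ X) (g : Y ⟶ Y') (a : ArrTm S X Y) :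
    dimap f g (Quot.mk _ a) = Quot.mk _ (((ArrTm.arr f).seq a).seq (ArrTm.arr g)) := rfl

theorem first_mk {X Y : C} (Z : C) (a : ArrTm S X Y) :
    first Z (Quot.mk _ a) = Quot.mk _ (a.first Z) := rfl

theorem dimap_eq_comp {X' X Y Y' : C} (f : X' ⟶ X) (g : Y ⟶ Y') (a : ASig S X Y) :
    dimap f g a = comp (comp (arr f) a) (arr g) := by
  induction a using Quot.ind; rfl

theorem arr_comp {X Y Z : C} (f : X ⟶ Y) (g : Y ⟶ Z) :
    (arr (f ≫ g) : ASig S X Z) = comp (arr f) (arr g) :=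
  Quot.sound (.arr_comp f g)

theorem id_comp {X Y : C} (a : ASig S X Y) : comp (arr (𝟙 X)) a = a := by
  induction a using Quot.ind; exact Quot.sound (.id_seq _)

theorem comp_id {X Y : C} (a : ASig S X Y) : comp a (arr (𝟙 Y)) = a := by
  induction a using Quot.ind; exact Quot.sound (.seq_id _)

theorem comp_assoc {W X Y Z : C} (a : ASig S W X) (b : ASig S X Y) (c : ASig S Y Z) :
    comp (comp a b) c = comp a (comp b c) := by
  induction a using Quot.ind
  induction b using Quot.ind
  induction c using Quot.ind
  exact Quot.sound (.assoc _ _ _)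

theorem dimap_id {X Y : C} (a : ASig S X Y) : dimap (𝟙 X) (𝟙 Y) a = a := by
  rw [dimap_eq_comp, id_comp, comp_id]

theorem dimap_comp {X'' X' X Y Y' Y'' : C} (f' : X'' ⟶ X') (f : X' ⟶ X) (g : Y ⟶ Y')
    (g' : Y' ⟶ Y'') (a : ASig S X Y) :
    dimap (f' ≫ f) (g ≫ g') a = dimap f' g' (dimap f g a) := by
  simp only [dimap_eq_comp, arr_comp, comp_assoc]

theorem dimap_arr {X' X Y Y' : C} (f : X' ⟶ X) (g : Y ⟶ Y') (h : X ⟶ Y) :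
    dimap f g (arr h : ASig S X Y) = arr (f ≫ h ≫ g) := by
  simp only [dimap_eq_comp, arr_comp, comp_assoc]

theorem first_arr {X Y : C} (Z : C) (f : X ⟶ Y) :
    first Z (arr f : ASig S X Y) = arr (f ▷ Z) :=
  Quot.sound (.first_arr Z f)

theorem first_comp {X Y W : C} (Z : C) (a : ASig S X Y) (b : ASig S Y W) :
    first Z (comp a b) = comp (first Z a) (first Z b) := by
  induction a using Quot.ind
  induction b using Quot.ind
  exact Quot.sound (.first_seq Z _ _)

theorem first_comp_arr_whiskerLeft {X Y Z Z' : C} (h : Z ⟶ Z') (a : ASig S X Y) :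
    comp (first Z a) (arr (Y ◁ h)) = comp (arr (X ◁ h)) (first Z' a) := by
  induction a using Quot.ind; exact Quot.sound (.first_pure _ h)

theorem first_comp_arr_fst {X Y Z : C} (a : ASig S X Y) :
    comp (first Z a) (arr (CartesianMonoidalCategory.fst Y Z))
      = comp (arr (CartesianMonoidalCategory.fst X Z)) a := by
  induction a using Quot.ind; exact Quot.sound (.first_fst _)

end ASig

/-- Lemma 6.2 (free strong promonad on a signature): `A_Σ := ArrTm/∼` carries the
structure of a strong promonad on `C`: it is contravariantly/covariantly functorial via
pre- and post-composition with `arr`, has unit `η = arr`, associative multiplication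
induced by `>>>` with `arr (𝟙)` as two-sided unit, and a strength induced by `first`
satisfying the strength laws. -/
theorem free_strong_promonad {C : Type u} [Category.{v} C] [CartesianMonoidalCategory C]
    (S : Signature C) :
    ∃ (map : ∀ (X' X Y Y' : C), (X' ⟶ X) → (Y ⟶ Y') → ASig S X Y → ASig S X' Y')
      (mul : ∀ (X Y Z : C), ASig S X Y → ASig S Y Z → ASig S X Z)
      (st : ∀ (X Y Z : C), ASig S X Y → ASig S (X ⊗ Z) (Y ⊗ Z)),
      -- the operations are induced by `arr`, `>>>` and `first`
      (∀ (X' X Y Y' : C) (f : X' ⟶ X) (g : Y ⟶ Y') (a : ArrTm S X Y),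
        map X' X Y Y' f g (Quot.mk _ a)
          = Quot.mk _ (((ArrTm.arr f).seq a).seq (ArrTm.arr g))) ∧
      (∀ (X Y Z : C) (a : ArrTm S X Y) (b : ArrTm S Y Z),
        mul X Y Z (Quot.mk _ a) (Quot.mk _ b) = Quot.mk _ (a.seq b)) ∧
      (∀ (X Y Z : C) (a : ArrTm S X Y),
        st X Y Z (Quot.mk _ a) = Quot.mk _ (a.first Z)) ∧
      -- functoriality of `A_Σ` in both variables
      (∀ (X Y : C) (a : ASig S X Y), map X X Y Y (𝟙 X) (𝟙 Y) a = a) ∧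
      (∀ (X'' X' X Y Y' Y'' : C) (f' : X'' ⟶ X') (f : X' ⟶ X) (g : Y ⟶ Y')
        (g' : Y' ⟶ Y'') (a : ASig S X Y),
        map X'' X Y Y'' (f' ≫ f) (g ≫ g') a = map X'' X' Y' Y'' f' g' (map X' X Y Y' f g a)) ∧
      -- naturality of the unit `η = arr`
      (∀ (X' X Y Y' : C) (f : X' ⟶ X) (g : Y ⟶ Y') (h : X ⟶ Y),
        map X' X Y Y' f g (Quot.mk _ (ArrTm.arr h)) = Quot.mk _ (ArrTm.arr (f ≫ h ≫ g))) ∧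
      -- monoid (promonad) laws: `η (𝟙)` is a two-sided unit and `mul` is associative
      (∀ (X Y : C) (a : ASig S X Y),
        mul X X Y (Quot.mk _ (ArrTm.arr (𝟙 X))) a = a) ∧
      (∀ (X Y : C) (a : ASig S X Y),
        mul X Y Y a (Quot.mk _ (ArrTm.arr (𝟙 Y))) = a) ∧
      (∀ (W X Y Z : C) (a : ASig S W X) (b : ASig S X Y) (c : ASig S Y Z),
        mul W Y Z (mul W X Y a b) c = mul W X Z a (mul X Y Z b c)) ∧
      -- strength laws
      (∀ (X Y Z : C) (f : X ⟶ Y),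
        st X Y Z (Quot.mk _ (ArrTm.arr f)) = Quot.mk _ (ArrTm.arr (f ▷ Z))) ∧
      (∀ (X Y W Z : C) (a : ASig S X Y) (b : ASig S Y W),
        st X W Z (mul X Y W a b) = mul (X ⊗ Z) (Y ⊗ Z) (W ⊗ Z) (st X Y Z a) (st Y W Z b)) ∧
      (∀ (X Y Z Z' : C) (h : Z ⟶ Z') (a : ASig S X Y),
        mul (X ⊗ Z) (Y ⊗ Z) (Y ⊗ Z') (st X Y Z a) (Quot.mk _ (ArrTm.arr (Y ◁ h)))
          = mul (X ⊗ Z) (X ⊗ Z') (Y ⊗ Z') (Quot.mk _ (ArrTm.arr (X ◁ h))) (st X Y Z' a)) ∧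
      (∀ (X Y Z : C) (a : ASig S X Y),
        mul (X ⊗ Z) (Y ⊗ Z) Y (st X Y Z a)
            (Quot.mk _ (ArrTm.arr (CartesianMonoidalCategory.fst Y Z)))
          = mul (X ⊗ Z) X Y (Quot.mk _ (ArrTm.arr (CartesianMonoidalCategory.fst X Z))) a) := by
  open ASig in
  exact ⟨fun _ _ _ _ => dimap, fun _ _ _ => comp, fun _ _ => first,
    fun _ _ _ _ => dimap_mk, fun _ _ _ => comp_mk, fun _ _ => first_mk, fun _ _ => dimap_id,
    fun _ _ _ _ _ _ => dimap_comp, fun _ _ _ _ => dimap_arr, fun _ _ => id_comp,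
    fun _ _ => comp_id, fun _ _ _ _ => comp_assoc, fun _ _ => first_arr,
    fun _ _ _ => first_comp, fun _ _ _ _ => first_comp_arr_whiskerLeft,
    fun _ _ _ => first_comp_arr_fst⟩
end
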